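/- Let α ∈ (0,1) and let k ≥ 2 be an integer. For an integer m with 0 ≤ m ≤ (k−1)/2 set φ_m = (k − 2m − 1)π/(2(k−α)) and a_m = 2^α k^α cos(φ_m)^α / (2 cos(α φ_m)). Then the values a_m are strictly increasing in m: if 0 ≤ m < m' ≤ (k−1)/2 are integers, then a_m < a_{m'}. -/

import Mathlib

open Real Set

/-! Since `log (cos x)` has derivative `-tan x`, the logarithm of `cos x ^ α / cos (α x)` has
derivative `α (tan (α x) - tan x)`, which is negative on `(0, π/2)` for `0 < α < 1` because `tan`
is increasing. Hence `x ↦ cos x ^ α / cos (α x)` is strictly decreasing on `[0, π/2)`, and the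
angles `φ_m` lie in `[0, π/2)` and decrease as `m` increases. -/

noncomputable def glAngle (k α t : ℝ) : ℝ := (k - 2 * t - 1) * π / (2 * (k - α))

lemma glAngle_mem_Ico {k α t : ℝ} (hα : α < 1) (ht : 0 ≤ t) (htk : 2 * t + 1 ≤ k) :
    glAngle k α t ∈ Ico 0 (π / 2) := by
  have hkα : 0 < k - α := by linarith
  refine ⟨div_nonneg (mul_nonneg (by linarith) pi_pos.le) (by positivity), ?_⟩
  rw [glAngle, div_lt_div_iff₀ (by positivity) two_pos]
  nlinarith [pi_pos]

lemma glAngle_strictAnti {k α : ℝ} (hkα : α < k) : StrictAnti (glAngle k α) := fun s t hst =>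
  div_lt_div_of_pos_right (by nlinarith [pi_pos]) (by linarith)

lemma cos_pos_of_mem_Ico {x : ℝ} (hx : x ∈ Ico 0 (π / 2)) : 0 < cos x :=
  cos_pos_of_mem_Ioo ⟨by linarith [pi_pos, hx.1], hx.2⟩

lemma mul_mem_Ico_zero_pi_div_two {α x : ℝ} (hα0 : 0 ≤ α) (hα1 : α ≤ 1)
    (hx : x ∈ Ico 0 (π / 2)) : α * x ∈ Ico 0 (π / 2) :=
  ⟨mul_nonneg hα0 hx.1, by nlinarith [hx.1, hx.2]⟩

lemma hasDerivAt_log_cos {x : ℝ} (hx : cos x ≠ 0) :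
    HasDerivAt (fun y => log (cos y)) (-tan x) x := by
  refine ((hasDerivAt_log hx).comp x (hasDerivAt_cos x)).congr_deriv ?_
  rw [tan_eq_sin_div_cos]
  ring

lemma strictAntiOn_mul_log_cos_sub_log_cos_mul {α : ℝ} (hα0 : 0 < α) (hα1 : α < 1) :
    StrictAntiOn (fun x => α * log (cos x) - log (cos (α * x))) (Ico 0 (π / 2)) := by
  have hderiv : ∀ x ∈ Ico 0 (π / 2), HasDerivAt (fun x => α * log (cos x) - log (cos (α * x)))
      (α * (tan (α * x) - tan x)) x := by
    intro x hx
    have hinner := (hasDerivAt_log_cos (cos_pos_of_mem_Ico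
      (mul_mem_Ico_zero_pi_div_two hα0.le hα1.le hx)).ne').comp x ((hasDerivAt_id x).const_mul α)
    exact (((hasDerivAt_log_cos (cos_pos_of_mem_Ico hx).ne').const_mul α).sub hinner).congr_deriv
      (by ring)
  refine strictAntiOn_of_hasDerivWithinAt_neg (convex_Ico 0 (π / 2))
    (fun x hx => (hderiv x hx).continuousAt.continuousWithinAt)
    (fun x hx => (hderiv x (Ioo_subset_Ico_self (by rwa [interior_Ico] at hx))).hasDerivWithinAt) ?_
  intro x hx
  rw [interior_Ico] at hx
  have htan : tan (α * x) < tan x := by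
    apply strictMonoOn_tan
    · constructor <;> nlinarith [hx.1, hx.2, pi_pos]
    · constructor <;> linarith [hx.1, hx.2, pi_pos]
    · nlinarith [hx.1]
  exact mul_neg_of_pos_of_neg hα0 (sub_neg.mpr htan)

lemma strictAntiOn_cos_rpow_div_cos_mul {α : ℝ} (hα0 : 0 < α) (hα1 : α < 1) :
    StrictAntiOn (fun x => cos x ^ α / cos (α * x)) (Ico 0 (π / 2)) := by
  have hexp : ∀ x ∈ Ico 0 (π / 2),
      cos x ^ α / cos (α * x) = exp (α * log (cos x) - log (cos (α * x))) := by
    intro x hx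
    have hαx := mul_mem_Ico_zero_pi_div_two hα0.le hα1.le hx
    rw [exp_sub, exp_log (cos_pos_of_mem_Ico hαx), rpow_def_of_pos (cos_pos_of_mem_Ico hx),
      mul_comm (log _)]
  intro x hx y hy hxy
  simp only [hexp x hx, hexp y hy, exp_lt_exp]
  exact strictAntiOn_mul_log_cos_sub_log_cos_mul hα0 hα1 hx hy hxy

theorem gl_intersection_points_increasing (α : ℝ) (hα : α ∈ Set.Ioo (0:ℝ) 1)
    (k m m' : ℕ) (hmm : m < m') (hm' : 2 * m' + 1 ≤ k) :
    2 ^ α * (k:ℝ) ^ α *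
        Real.cos (((k:ℝ) - 2 * (m:ℝ) - 1) * π / (2 * ((k:ℝ) - α))) ^ α /
        (2 * Real.cos (α * (((k:ℝ) - 2 * (m:ℝ) - 1) * π / (2 * ((k:ℝ) - α))))) <
      2 ^ α * (k:ℝ) ^ α *
        Real.cos (((k:ℝ) - 2 * (m':ℝ) - 1) * π / (2 * ((k:ℝ) - α))) ^ α /
        (2 * Real.cos (α * (((k:ℝ) - 2 * (m':ℝ) - 1) * π / (2 * ((k:ℝ) - α))))) := by
  obtain ⟨hα0, hα1⟩ := hα
  have hm'k : 2 * (m' : ℝ) + 1 ≤ k := by exact_mod_cast hm'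
  have hmm' : (m : ℝ) < m' := by exact_mod_cast hmm
  have hdecr := strictAntiOn_cos_rpow_div_cos_mul hα0 hα1
    (glAngle_mem_Ico hα1 m'.cast_nonneg hm'k)
    (glAngle_mem_Ico hα1 m.cast_nonneg (by linarith))
    (glAngle_strictAnti (by linarith) hmm')
  have hk : (0 : ℝ) < k := by linarith
  have hC : 0 < 2 ^ α * (k : ℝ) ^ α / 2 := by positivity
  rw [mul_div_mul_comm (2 ^ α * (k : ℝ) ^ α), mul_div_mul_comm (2 ^ α * (k : ℝ) ^ α)]
  exact mul_lt_mul_of_pos_left hdecr hC
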